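/- arXiv:2210.06056 — 3 statements merged into one kernel-verified Lean document; each statement's English description precedes it below -/
import Mathlib

section
/- For any integers c_1, …, c_k (k ≥ 1), the matrix product σ_{1,q}^{−c_1}·S_q·σ_{1,q}^{−c_2}·S_q·⋯·σ_{1,q}^{−c_k}·S_q applied to the column vector (1, 1 − q)ᵀ equals the column vector (E^♭_k(c_1,…,c_k)_q, E^♭_{k−1}(c_2,…,c_k)_q)ᵀ. -/
noncomputable section

/-- The field ℚ(q) of rational functions over ℚ. -/
abbrev K : Type := RatFunc ℚ

/-- The variable q. -/
def q : K := RatFunc.X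

/-- Right q-integer `[n]^♯` with deformation parameter `x`. -/
def qsX (x : K) (n : ℤ) : K := (1 - x ^ n) / (1 - x)

/-- Left q-integer `[n]^♭` with deformation parameter `x`. -/
def qfX (x : K) (n : ℤ) : K := (1 - x ^ (n - 1) + x ^ n - x ^ (n + 1)) / (1 - x)

/-- Right q-integer `[n]^♯_q`. -/
def qs (n : ℤ) : K := qsX q n

/-- Left q-integer `[n]^♭_q`. -/
def qf (n : ℤ) : K := qfX q n

/-- Right q-deformed Euler continuant `E^♯` (first-row expansion of the
tridiagonal determinant), with parameter `x`. -/
def EsharpX (x : K) : List ℤ → K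
  | [] => 1
  | [c] => qsX x c
  | c :: d :: rest => qsX x c * EsharpX x (d :: rest) - x ^ (c - 1) * EsharpX x rest

/-- Left q-deformed Euler continuant `E^♭` (first-row expansion of the
tridiagonal determinant whose (k,k) entry is the left q-integer), with parameter `x`. -/
def EflatX (x : K) : List ℤ → K
  | [] => 1
  | [c] => qfX x c
  | c :: d :: rest => qsX x c * EflatX x (d :: rest) - x ^ (c - 1) * EflatX x rest

def Esharp (L : List ℤ) : K := EsharpX q L

def Eflat (L : List ℤ) : K := EflatX q L

/-- `E^♯_{j-1}(d_2,…,d_j)` for the input list `(d_1,…,d_j)`, with the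
convention `E^♯_{-1}() = 0` when the list is empty. -/
def EsharpD : List ℤ → K
  | [] => 0
  | _ :: rest => Esharp rest

/-- `E^♭_{j-1}(d_2,…,d_j)` for the input list `(d_1,…,d_j)`, with the
convention `E^♭_{-1}() = 1 - q` when the list is empty. -/
def EflatD : List ℤ → K
  | [] => 1 - q
  | _ :: rest => Eflat rest

/-- Left q-deformed negative continued fraction `[[c_1,…,c_k]]^♭_q`. -/
def nflat : List ℤ → K
  | [] => 0
  | [c] => qf c
  | c :: d :: rest => qs c - q ^ (c - 1) / nflat (d :: rest)

/-- Right q-deformed negative continued fraction `[[c_1,…,c_k]]^♯_q`. -/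
def nsharp : List ℤ → K
  | [] => 0
  | [c] => qs c
  | c :: d :: rest => qs c - q ^ (c - 1) / nsharp (d :: rest)

/-- Left q-deformed regular continued fraction, with alternating parameter `x`, `x⁻¹`. -/
def regFlatX : K → List ℤ → K
  | _, [] => 0
  | x, [a] => qfX x a
  | x, a :: d :: rest => qsX x a + x ^ a / regFlatX x⁻¹ (d :: rest)

/-- Left q-deformed regular continued fraction `[a_1,…,a_{2m}]^♭_q`. -/
def regFlat (L : List ℤ) : K := regFlatX q L

/-- Classical negative continued fraction `[[c_1,…,c_k]] ∈ ℚ`. -/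
def negCF : List ℤ → ℚ
  | [] => 0
  | [c] => c
  | c :: d :: rest => c - 1 / negCF (d :: rest)

/-- Classical regular continued fraction `[a_1,…,a_{2m}] ∈ ℚ`. -/
def regCF : List ℤ → ℚ
  | [] => 0
  | [a] => a
  | a :: d :: rest => a + 1 / regCF (d :: rest)

/-- The matrix σ_{1,q} as an invertible 2×2 matrix over ℚ(q). -/
def σ1 : (Matrix (Fin 2) (Fin 2) K)ˣ where
  val := !![q⁻¹, -q⁻¹; 0, 1]
  inv := !![q, 1; 0, 1]
  val_inv := by
    have hq : (q : K) ≠ 0 := RatFunc.X_ne_zero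
    ext i j
    fin_cases i <;> fin_cases j <;>
      simp [Matrix.mul_apply, Fin.sum_univ_two, inv_mul_cancel₀ hq]
  inv_val := by
    have hq : (q : K) ≠ 0 := RatFunc.X_ne_zero
    ext i j
    fin_cases i <;> fin_cases j <;>
      simp [Matrix.mul_apply, Fin.sum_univ_two, mul_inv_cancel₀ hq]

/-- The matrix σ_{2,q} as an invertible 2×2 matrix over ℚ(q). -/
def σ2 : (Matrix (Fin 2) (Fin 2) K)ˣ where
  val := !![1, 0; 1, q⁻¹]
  inv := !![1, 0; -q, q]
  val_inv := by
    have hq : (q : K) ≠ 0 := RatFunc.X_ne_zero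
    ext i j
    fin_cases i <;> fin_cases j <;>
      simp [Matrix.mul_apply, Fin.sum_univ_two, inv_mul_cancel₀ hq]
  inv_val := by
    have hq : (q : K) ≠ 0 := RatFunc.X_ne_zero
    ext i j
    fin_cases i <;> fin_cases j <;>
      simp [Matrix.mul_apply, Fin.sum_univ_two, mul_inv_cancel₀ hq]

/-- The matrix S_q as an invertible 2×2 matrix over ℚ(q). -/
def Sq : (Matrix (Fin 2) (Fin 2) K)ˣ where
  val := !![0, -q⁻¹; 1, 0]
  inv := !![0, 1; -q, 0]
  val_inv := by
    have hq : (q : K) ≠ 0 := RatFunc.X_ne_zero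
    ext i j
    fin_cases i <;> fin_cases j <;>
      simp [Matrix.mul_apply, Fin.sum_univ_two, inv_mul_cancel₀ hq]
  inv_val := by
    have hq : (q : K) ≠ 0 := RatFunc.X_ne_zero
    ext i j
    fin_cases i <;> fin_cases j <;>
      simp [Matrix.mul_apply, Fin.sum_univ_two, mul_inv_cancel₀ hq]

/-- The product σ_{1,q}^{-c_1}·S_q·σ_{1,q}^{-c_2}·S_q⋯σ_{1,q}^{-c_k}·S_q. -/
def prodCS : List ℤ → (Matrix (Fin 2) (Fin 2) K)ˣ
  | [] => 1
  | c :: rest => σ1 ^ (-c) * Sq * prodCS rest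

/-- The product σ_{1,q}^{-a_1}·σ_{2,q}^{a_2}⋯σ_{1,q}^{-a_{2m-1}}·σ_{2,q}^{a_{2m}}. -/
def prodReg : List ℤ → (Matrix (Fin 2) (Fin 2) K)ˣ
  | [] => 1
  | [a] => σ1 ^ (-a)
  | a :: b :: rest => σ1 ^ (-a) * σ2 ^ b * prodReg rest

/-- The sum a_2 + a_4 + ⋯ of the even-indexed entries. -/
def evenSum : List ℤ → ℤ
  | [] => 0
  | [_] => 0
  | _ :: b :: rest => b + evenSum rest

/-- Möbius action of a 2×2 matrix on ℚ(q). -/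
def mobius (A : Matrix (Fin 2) (Fin 2) K) (x : K) : K :=
  (A 0 0 * x + A 0 1) / (A 1 0 * x + A 1 1)

local notation "M₂" => Matrix (Fin 2) (Fin 2) K

lemma q_ne_zero : q ≠ 0 := RatFunc.X_ne_zero

lemma one_sub_q_ne_zero : 1 - q ≠ 0 := by
  rw [sub_ne_zero, q, ← map_one (algebraMap (Polynomial ℚ) K), ← RatFunc.algebraMap_X, Ne,
    (RatFunc.algebraMap_injective ℚ).eq_iff]
  exact fun h => by simpa using congrArg Polynomial.natDegree h

section QIntegers

variable {x : K} (hx₀ : x ≠ 0) (hx₁ : 1 - x ≠ 0)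
include hx₀ hx₁

lemma qsX_add_one (n : ℤ) : qsX x (n + 1) = x ^ n + qsX x n := by
  rw [qsX, qsX, zpow_add_one₀ hx₀]
  field_simp
  ring

lemma qfX_eq_qsX_sub (n : ℤ) : qfX x n = qsX x n - x ^ (n - 1) * (1 - x) := by
  have hn : x ^ n = x ^ (n - 1) * x := by rw [← zpow_add_one₀ hx₀, sub_add_cancel]
  have hn' : x ^ (n + 1) = x ^ (n - 1) * x * x := by rw [zpow_add_one₀ hx₀, hn]
  rw [qfX, qsX, hn', hn]
  field_simp
  ring

end QIntegers

lemma coe_σ1_zpow_neg (c : ℤ) : ((σ1 ^ (-c) : M₂ˣ) : M₂) = !![q ^ c, qs c; 0, 1] := by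
  have step (c : ℤ) :
      !![q ^ c, qs c; 0, 1] * ((σ1⁻¹ : M₂ˣ) : M₂) = !![q ^ (c + 1), qs (c + 1); 0, 1] := by
    rw [show ((σ1⁻¹ : M₂ˣ) : M₂) = !![q, 1; 0, 1] from rfl, Matrix.mul_fin_two, qs, qs,
      qsX_add_one q_ne_zero one_sub_q_ne_zero, zpow_add_one₀ q_ne_zero]
    simp
  induction c using Int.induction_on with
  | zero => simp [Matrix.one_fin_two, qs, qsX]
  | succ n ih => rw [neg_add, zpow_add, zpow_neg_one, Units.val_mul, ih, step]
  | pred n ih =>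
    have h := step (-n - 1)
    rw [sub_add_cancel, ← ih, Units.mul_inv_eq_iff_eq_mul, ← Units.val_mul, ← zpow_add_one] at h
    rw [h, show -(-(n : ℤ)) + 1 = -(-n - 1) by ring]

lemma coe_σ1_zpow_neg_mul_Sq (c : ℤ) :
    ((σ1 ^ (-c) * Sq : M₂ˣ) : M₂) = !![qs c, -q ^ (c - 1); 1, 0] := by
  rw [Units.val_mul, coe_σ1_zpow_neg, show ((Sq : M₂ˣ) : M₂) = !![0, -q⁻¹; 1, 0] from rfl,
    Matrix.mul_fin_two, zpow_sub_one₀ q_ne_zero]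
  simp

lemma Eflat_cons (c : ℤ) (L : List ℤ) :
    Eflat (c :: L) = qs c * Eflat L - q ^ (c - 1) * EflatD L := by
  cases L with
  | nil =>
    simp only [Eflat, EflatD, EflatX, mul_one]
    exact qfX_eq_qsX_sub q_ne_zero one_sub_q_ne_zero c
  | cons d rest => rfl

/-- `(1, 1 - q)ᵀ = (E^♭_0(), E^♭_{-1}())ᵀ`, and each factor `σ_{1,q}^{-c}·S_q` performs one step
of the continuant recurrence, so the claim holds for every list, the empty one included. -/
theorem prodCS_mulVec_eq_Eflat_EflatD (L : List ℤ) :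
    (prodCS L : M₂).mulVec ![1, 1 - q] = ![Eflat L, EflatD L] := by
  induction L with
  | nil => simp [prodCS, Eflat, EflatD, EflatX]
  | cons c L ih =>
    rw [prodCS, Units.val_mul, ← Matrix.mulVec_mulVec, ih, coe_σ1_zpow_neg_mul_Sq, Eflat_cons]
    ext i
    fin_cases i <;> simp [Matrix.mulVec, dotProduct, Fin.sum_univ_two, EflatD, sub_eq_add_neg]

/-- the matrix product σ_{1,q}^{-c_1}·S_q⋯σ_{1,q}^{-c_k}·S_q applied to
the column vector (1, 1-q)ᵀ gives the left q-deformed Euler continuants. -/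
theorem prodCS_mulVec (c1 : ℤ) (cs : List ℤ) :
    (prodCS (c1 :: cs) : Matrix (Fin 2) (Fin 2) K).mulVec ![1, 1 - q]
      = ![Eflat (c1 :: cs), Eflat cs] :=
  prodCS_mulVec_eq_Eflat_EflatD (c1 :: cs)
end
end

section
/- For integers c_1 ≥ 1 and c_2, …, c_k ≥ 2, applying the Möbius transformation of the matrix σ_{1,q}^{−c_1}S_q·σ_{1,q}^{−c_2}S_q·⋯·σ_{1,q}^{−c_k}S_q to the element 1/(1 − q) of ℚ(q) yields the left q-deformed negative continued fraction: σ_{1,q}^{−c_1}S_q⋯σ_{1,q}^{−c_k}S_q(1/(1 − q)) = [[c_1,…,c_k]]^♭_q. -/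
noncomputable section

lemma hq0 : (q : K) ≠ 0 := RatFunc.X_ne_zero
lemma hq1 : (1 - q : K) ≠ 0 := by
  have h : (q : K) ≠ 1 := by
    intro h
    have h2 : (algebraMap (Polynomial ℚ) K) Polynomial.X = (algebraMap (Polynomial ℚ) K) 1 := by
      simpa [q, RatFunc.algebraMap_X] using h
    have := RatFunc.algebraMap_injective ℚ h2
    simpa using congrArg (Polynomial.eval (0:ℚ)) this
  exact sub_ne_zero.mpr (Ne.symm h)

lemma qs_natCast (n : ℕ) : qs (n : ℤ) = (1 - q ^ n) / (1 - q) := by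
  rw [qs, qsX, zpow_natCast]

lemma sigma1_inv_pow (n : ℕ) : ((σ1⁻¹ : (Matrix (Fin 2) (Fin 2) K)ˣ) ^ n : (Matrix (Fin 2) (Fin 2) K)ˣ).val
    = !![q ^ n, qs n; 0, 1] := by
  induction n with
  | zero => ext i j; fin_cases i <;> fin_cases j <;> simp [qs, qsX]
  | succ n ih =>
    have h : ((σ1⁻¹ : (Matrix (Fin 2) (Fin 2) K)ˣ) ^ (n+1)).val = (σ1⁻¹ : (Matrix (Fin 2) (Fin 2) K)ˣ).val * ((σ1⁻¹ : (Matrix (Fin 2) (Fin 2) K)ˣ) ^ n).val := by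
      rw [pow_succ']; simp
    rw [h, ih]
    have hval : (σ1⁻¹ : (Matrix (Fin 2) (Fin 2) K)ˣ).val = !![q, 1; 0, 1] := rfl
    rw [hval]
    have h1 := hq1
    ext i j
    fin_cases i <;> fin_cases j <;>
      simp only [Matrix.mul_apply, Fin.sum_univ_two, qs_natCast, Matrix.of_apply, Matrix.cons_val', Matrix.cons_val_zero, Matrix.cons_val_one, Matrix.head_cons, Matrix.empty_val', Matrix.cons_val_fin_one, Matrix.head_fin_const] <;>
      push_cast <;> field_simp <;> ring

lemma sigma1Sq (n : ℕ) : ((σ1 ^ (-(n:ℤ)) * Sq : (Matrix (Fin 2) (Fin 2) K)ˣ) : Matrix (Fin 2) (Fin 2) K)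
    = !![qs n, -(q ^ n * q⁻¹); 1, 0] := by
  have h : (σ1 : (Matrix (Fin 2) (Fin 2) K)ˣ) ^ (-(n:ℤ)) = (σ1⁻¹) ^ n := by
    rw [zpow_neg, ← inv_zpow, zpow_natCast]
  rw [Units.val_mul, h, sigma1_inv_pow]
  have hSq : (Sq : (Matrix (Fin 2) (Fin 2) K)ˣ).val = !![0, -q⁻¹; 1, 0] := rfl
  rw [hSq]
  ext i j
  fin_cases i <;> fin_cases j <;>
    simp [Matrix.mul_apply, Fin.sum_univ_two]

lemma algK_inj : Function.Injective (algebraMap (Polynomial ℚ) K) :=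
  RatFunc.algebraMap_injective ℚ

lemma algK_ne_zero {A : Polynomial ℚ} (h : A.eval 0 = 1) :
    algebraMap (Polynomial ℚ) K A ≠ 0 := by
  have hA : A ≠ 0 := by intro h0; rw [h0] at h; simp at h
  exact (map_ne_zero_iff _ algK_inj).mpr hA

lemma q_eq : (q : K) = algebraMap (Polynomial ℚ) K Polynomial.X := by
  rw [q, RatFunc.algebraMap_X]

lemma nflat_poly : ∀ cs : List ℤ, (∀ x ∈ cs, 2 ≤ x) → cs ≠ [] →
    ∃ A B : Polynomial ℚ, A.eval 0 = 1 ∧ B.eval 0 = 1 ∧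
      nflat cs = algebraMap (Polynomial ℚ) K A / algebraMap (Polynomial ℚ) K B
  | [], _, h => absurd rfl h
  | [c], hc, _ => by
    have hc2 : 2 ≤ c := hc c (by simp)
    obtain ⟨k, rfl⟩ : ∃ k : ℕ, c = ((k:ℤ) + 2) :=
      ⟨(c - 2).toNat, by omega⟩
    refine ⟨1 - Polynomial.X ^ (k+1) + Polynomial.X ^ (k+2) - Polynomial.X ^ (k+3),
      1 - Polynomial.X, by simp, by simp, ?_⟩
    have e1 : ((k:ℤ) + 2 - 1) = ((k+1 : ℕ) : ℤ) := by push_cast; ring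
    have e3 : ((k:ℤ) + 2 + 1) = ((k+3 : ℕ) : ℤ) := by push_cast; ring
    have e2 : ((k:ℤ) + 2) = ((k+2 : ℕ) : ℤ) := by push_cast; ring
    rw [nflat, qf, qfX, e1, e3, e2, zpow_natCast, zpow_natCast, zpow_natCast]
    simp only [map_sub, map_add, map_mul, map_pow, map_one, ← q_eq]
  | c :: d :: rest, hc, _ => by
    obtain ⟨A, B, hA, hB, hAB⟩ := nflat_poly (d :: rest)
      (fun x hx => hc x (by simp [hx])) (by simp)
    have hc2 : 2 ≤ c := hc c (by simp)
    obtain ⟨k, rfl⟩ : ∃ k : ℕ, c = ((k:ℤ) + 2) := ⟨(c - 2).toNat, by omega⟩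
    refine ⟨(1 - Polynomial.X ^ (k+2)) * A - Polynomial.X ^ (k+1) * (1 - Polynomial.X) * B,
      (1 - Polynomial.X) * A, by simp [hA], by simp [hA], ?_⟩
    have hAne : algebraMap (Polynomial ℚ) K A ≠ 0 := algK_ne_zero hA
    have hBne : algebraMap (Polynomial ℚ) K B ≠ 0 := algK_ne_zero hB
    have h1 := hq1
    have e1 : ((k:ℤ) + 2 - 1) = ((k+1 : ℕ) : ℤ) := by push_cast; ring
    have e2 : ((k:ℤ) + 2) = ((k+2 : ℕ) : ℤ) := by push_cast; ring
    rw [nflat, hAB, qs, qsX, e1, e2, zpow_natCast, zpow_natCast]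
    simp only [map_sub, map_add, map_mul, map_pow, map_one, ← q_eq]
    rw [div_div_eq_mul_div]
    field_simp
  termination_by cs => cs.length

lemma nflat_ne_zero (cs : List ℤ) (h : ∀ x ∈ cs, 2 ≤ x) (hne : cs ≠ []) :
    nflat cs ≠ 0 := by
  obtain ⟨A, B, hA, hB, hAB⟩ := nflat_poly cs h hne
  rw [hAB]
  exact div_ne_zero (algK_ne_zero hA) (algK_ne_zero hB)

lemma prodCS_cons_val (c : ℤ) (hc : 0 ≤ c) (cs : List ℤ) :
    (prodCS (c :: cs)).val = !![qs c, -(q ^ c.toNat * q⁻¹); 1, 0] * (prodCS cs).val := by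
  obtain ⟨n, rfl⟩ : ∃ n : ℕ, c = (n : ℤ) := ⟨c.toNat, (Int.toNat_of_nonneg hc).symm⟩
  rw [prodCS, Units.val_mul, sigma1Sq]
  simp

/-- Numerator of the Möbius action of `prodCS L` at `1/(1-q)`. -/
def Nv (L : List ℤ) : K := (prodCS L).val 0 0 * (1 / (1 - q)) + (prodCS L).val 0 1

lemma Nv_nil : Nv [] = 1 / (1 - q) := by
  simp [Nv, prodCS]

lemma Nv_cons (c : ℤ) (hc : 0 ≤ c) (cs : List ℤ) :
    Nv (c :: cs) = qs c * Nv cs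
      - q ^ c.toNat * q⁻¹ * ((prodCS cs).val 1 0 * (1 / (1 - q)) + (prodCS cs).val 1 1) := by
  rw [Nv, Nv, prodCS_cons_val c hc]
  simp [Matrix.mul_apply, Fin.sum_univ_two]
  ring

lemma Dv_cons (c : ℤ) (hc : 0 ≤ c) (cs : List ℤ) :
    (prodCS (c :: cs)).val 1 0 * (1 / (1 - q)) + (prodCS (c :: cs)).val 1 1 = Nv cs := by
  rw [prodCS_cons_val c hc]
  simp [Nv, Matrix.mul_apply, Fin.sum_univ_two]

lemma qf_eq (c : ℤ) (hc : 1 ≤ c) : qf c = qs c - q ^ c.toNat * q⁻¹ * (1 - q) := by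
  obtain ⟨k, rfl⟩ : ∃ k : ℕ, c = ((k:ℤ) + 1) := ⟨(c - 1).toNat, by omega⟩
  have e1 : ((k:ℤ) + 1 - 1) = ((k : ℕ) : ℤ) := by push_cast; ring
  have e3 : ((k:ℤ) + 1 + 1) = ((k+2 : ℕ) : ℤ) := by push_cast; ring
  have e2 : ((k:ℤ) + 1) = ((k+1 : ℕ) : ℤ) := by push_cast; ring
  have ht : ((k:ℤ) + 1).toNat = k + 1 := by omega
  rw [qf, qfX, qs, qsX, ht, e1, e3, e2, zpow_natCast, zpow_natCast, zpow_natCast]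
  have h1 := hq1
  have h0 := hq0
  field_simp
  ring

lemma qpow_pred (c : ℤ) (hc : 1 ≤ c) : q ^ (c - 1) = q ^ c.toNat * q⁻¹ := by
  obtain ⟨k, rfl⟩ : ∃ k : ℕ, c = ((k:ℤ) + 1) := ⟨(c - 1).toNat, by omega⟩
  have e1 : ((k:ℤ) + 1 - 1) = ((k : ℕ) : ℤ) := by push_cast; ring
  have ht : ((k:ℤ) + 1).toNat = k + 1 := by omega
  rw [e1, zpow_natCast, ht, pow_succ, mul_assoc, mul_inv_cancel₀ hq0, mul_one]

lemma Nv_spec : ∀ cs : List ℤ, (∀ x ∈ cs, 2 ≤ x) →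
    Nv cs ≠ 0 ∧ ∀ c : ℤ, 1 ≤ c → Nv (c :: cs) = nflat (c :: cs) * Nv cs := by
  intro cs
  induction cs with
  | nil =>
    intro _
    constructor
    · rw [Nv_nil]
      exact div_ne_zero one_ne_zero hq1
    · intro c hc
      rw [Nv_cons c (by omega), Nv_nil]
      have hnf1 : nflat [c] = qf c := rfl
      rw [hnf1, qf_eq c hc]
      have h1 := hq1
      simp only [prodCS, Units.val_one, Matrix.one_apply_ne (by decide : (1:Fin 2) ≠ 0),
        Matrix.one_apply_eq, zero_mul, zero_add, mul_one]
      field_simp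
  | cons d rest ih =>
    intro h
    have hd : 2 ≤ d := h d (by simp)
    have hrest : ∀ x ∈ rest, 2 ≤ x := fun x hx => h x (by simp [hx])
    obtain ⟨hN, hrec⟩ := ih hrest
    have hnf : nflat (d :: rest) ≠ 0 := nflat_ne_zero _ h (by simp)
    have key : Nv (d :: rest) = nflat (d :: rest) * Nv rest := hrec d (by omega)
    constructor
    · rw [key]; exact mul_ne_zero hnf hN
    · intro c hc
      rw [Nv_cons c (by omega), Dv_cons d (by omega), key]
      have hexp : nflat (c :: d :: rest) = qs c - q ^ (c-1) / nflat (d :: rest) := rfl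
      rw [hexp, qpow_pred c hc, sub_mul, mul_assoc, div_mul_eq_mul_div,
        mul_div_assoc, mul_comm (nflat (d :: rest)) (Nv rest), mul_div_assoc,
        div_self hnf, mul_one]
      ring

/-- the Möbius action of σ_{1,q}^{-c_1}S_q⋯σ_{1,q}^{-c_k}S_q on 1/(1-q)
yields the left q-deformed negative continued fraction. -/
theorem mobius_prodCS_eq_nflat (c1 : ℤ) (cs : List ℤ)
    (hc1 : 1 ≤ c1) (hcs : ∀ x ∈ cs, 2 ≤ x) :
    mobius (prodCS (c1 :: cs) : Matrix (Fin 2) (Fin 2) K) (1 / (1 - q))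
      = nflat (c1 :: cs) := by
  obtain ⟨hN, hrec⟩ := Nv_spec cs hcs
  rw [mobius]
  have hNum : (prodCS (c1 :: cs)).val 0 0 * (1 / (1 - q)) + (prodCS (c1 :: cs)).val 0 1
      = Nv (c1 :: cs) := rfl
  rw [hNum, Dv_cons c1 (by omega) cs, hrec c1 hc1, mul_div_assoc, div_self hN, mul_one]
end
end

section
/- For integers c_1, …, c_l with c_l > 2 and any integer h ≥ 0, one has q^h·(E^♯_{l+1}(c_1,…,c_l,2)_q − E^♯_l(c_1,…,c_l)_q) = E^♯_{l+h+1}(c_1,…,c_l,2^{(h+1)})_q − E^♯_{l+h}(c_1,…,c_l,2^{(h)})_q, where 2^{(j)} denotes j consecutive entries equal to 2. -/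
noncomputable section

/-! Appending `2, 2` to a list `L` gives, by the last-column expansion, the three-term recurrence
`E(L,2,2) = (1 + q) E(L,2) - q E(L)`. Hence the successive differences of `E(L, 2^{(n)})` form a
geometric sequence of ratio `q`. -/

theorem EsharpX_append_pair (x : K) : ∀ (L : List ℤ) (d c : ℤ),
    EsharpX x (L ++ [d, c]) = qsX x c * EsharpX x (L ++ [d]) - x ^ (d - 1) * EsharpX x L
  | [], d, c => by simp only [List.nil_append, EsharpX]; ring
  | [a], d, c => by simp only [List.cons_append, List.nil_append, EsharpX]; ring
  | a :: b :: L, d, c => by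
    have hbL := EsharpX_append_pair x (b :: L) d c
    have hL := EsharpX_append_pair x L d c
    simp only [List.cons_append, EsharpX] at hbL hL ⊢
    rw [hbL, hL]; ring

theorem qsX_two {x : K} (hx : x ≠ 1) : qsX x 2 = 1 + x := by
  rw [qsX, div_eq_iff (sub_ne_zero.mpr hx.symm)]
  norm_num; ring

theorem EsharpX_append_replicate_two_sub {x : K} (hx : x ≠ 1) (L : List ℤ) (n : ℕ) :
    EsharpX x (L ++ List.replicate (n + 1) 2) - EsharpX x (L ++ List.replicate n 2)
      = x ^ n * (EsharpX x (L ++ [2]) - EsharpX x L) := by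
  induction n with
  | zero => simp
  | succ n ih =>
    have hexp := EsharpX_append_pair x (L ++ List.replicate n 2) 2 2
    rw [qsX_two hx] at hexp
    simp only [List.append_assoc, List.replicate_succ', List.singleton_append] at hexp ih ⊢
    rw [hexp, show (2 : ℤ) - 1 = 1 by norm_num, zpow_one, pow_succ]
    linear_combination x * ih

theorem q_ne_one : q ≠ 1 := by
  rw [q, ← RatFunc.algebraMap_X, ← map_one (algebraMap (Polynomial ℚ) K), Ne,
    (IsFractionRing.injective (Polynomial ℚ) K).eq_iff]
  simpa using Polynomial.X_ne_C (1 : ℚ)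

theorem Esharp_two_pow_general (cs : List ℤ) (cl : ℤ) (h : ℕ) :
    q ^ (h : ℤ) * (Esharp ((cs ++ [cl]) ++ [2]) - Esharp (cs ++ [cl]))
      = Esharp ((cs ++ [cl]) ++ List.replicate (h + 1) 2)
        - Esharp ((cs ++ [cl]) ++ List.replicate h 2) := by
  rw [zpow_natCast]
  exact (EsharpX_append_replicate_two_sub q_ne_one _ h).symm

/-- q^h·(E^♯_{l+1}(c_1,…,c_l,2) − E^♯_l(c_1,…,c_l))
    = E^♯_{l+h+1}(c_1,…,c_l,2^{(h+1)}) − E^♯_{l+h}(c_1,…,c_l,2^{(h)}). -/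
theorem Esharp_two_pow (cs : List ℤ) (cl : ℤ) (hcl : 2 < cl) (h : ℕ) :
    q ^ (h : ℤ) * (Esharp ((cs ++ [cl]) ++ [2]) - Esharp (cs ++ [cl]))
      = Esharp ((cs ++ [cl]) ++ List.replicate (h + 1) 2)
        - Esharp ((cs ++ [cl]) ++ List.replicate h 2) :=
  Esharp_two_pow_general cs cl h
end
end
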